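/- Let Γ be a connected G-arc-transitive bicirculant with at least three vertices over a cyclic subgroup H of G (so H ≤ G ≤ Aut(Γ), H cyclic and semiregular with exactly two orbits of equal size on V(Γ)). Let N be a normal subgroup of G that is maximal subject to having at least three orbits on V(Γ). Then: Γ is an r-cover of the quotient graph Γ_N, where r divides the valency of Γ; Γ_N is G/N-arc-transitive and is either a circulant or a bicirculant over HN/N; and the induced action of G/N on V(Γ_N) is faithful and is either quasiprimitive or bi-quasiprimitive. -/

import Mathlib

open SimpleGraph

namespace ATB

variable {V : Type*}

/-- `σ` is an automorphism of the graph `Γ`. -/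
def IsAut (Γ : SimpleGraph V) (σ : Equiv.Perm V) : Prop :=
  ∀ u v : V, Γ.Adj (σ u) (σ v) ↔ Γ.Adj u v

/-- The full automorphism group of `Γ`, as a subgroup of `Equiv.Perm V`. -/
def autGroup (Γ : SimpleGraph V) : Subgroup (Equiv.Perm V) where
  carrier := {σ | IsAut Γ σ}
  one_mem' := by intro u v; simp
  mul_mem' := by
    intro a b ha hb u v
    rw [show ((a * b) u) = a (b u) from rfl, show ((a * b) v) = a (b v) from rfl,
      ha (b u) (b v), hb u v]
  inv_mem' := by
    intro a ha u v
    have h := ha (a⁻¹ u) (a⁻¹ v)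
    rw [show a (a⁻¹ u) = u from a.apply_symm_apply u, show a (a⁻¹ v) = v from a.apply_symm_apply v] at h
    exact h.symm

/-- `G` is transitive on the vertices. -/
def VertexTrans (G : Subgroup (Equiv.Perm V)) : Prop := ∀ u v : V, ∃ σ ∈ G, σ u = v

/-- `G` is transitive on the arcs (ordered pairs of adjacent vertices) of `Γ`. -/
def ArcTrans (Γ : SimpleGraph V) (G : Subgroup (Equiv.Perm V)) : Prop :=
  ∀ u v u' v' : V, Γ.Adj u v → Γ.Adj u' v' → ∃ σ ∈ G, σ u = u' ∧ σ v = v'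

/-- `Γ` is arc-transitive (with respect to its full automorphism group). -/
def IsArcTransitive (Γ : SimpleGraph V) : Prop := ArcTrans Γ (autGroup Γ)

/-- A circulant graph: there is an automorphism of order `|V|` acting transitively,
i.e. a cyclic subgroup of the automorphism group acting regularly on the vertices. -/
def IsCirculant (Γ : SimpleGraph V) : Prop :=
  ∃ σ : Equiv.Perm V, IsAut Γ σ ∧ orderOf σ = Nat.card V ∧
    ∀ v w : V, ∃ k : ℕ, (σ ^ k) v = w

/-- A bicirculant graph on `2n` vertices: an automorphism of order `n` with exactly two
orbits (necessarily both of length `n`). -/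
def IsBicirculant (Γ : SimpleGraph V) : Prop :=
  ∃ σ : Equiv.Perm V, IsAut Γ σ ∧ 2 * orderOf σ = Nat.card V ∧
    ∃ v w : V, (∀ u : V, (∃ k : ℕ, (σ ^ k) v = u) ∨ (∃ k : ℕ, (σ ^ k) w = u)) ∧
      ∀ k : ℕ, (σ ^ k) v ≠ w

/-- The orbit of `v` under a subgroup `H` of permutations. -/
def orb (H : Subgroup (Equiv.Perm V)) (v : V) : Set V := {w | ∃ σ ∈ H, σ v = w}

/-- `H` acts semiregularly: only the identity fixes a point. -/
def Semiregular (H : Subgroup (Equiv.Perm V)) : Prop :=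
  ∀ σ ∈ H, σ ≠ 1 → ∀ v : V, σ v ≠ v

/-- `H` acts regularly on the vertices. -/
def RegularOn (H : Subgroup (Equiv.Perm V)) : Prop := VertexTrans H ∧ Semiregular H

/-- `H` has exactly two orbits, namely those of `v` and `w`. -/
def TwoOrbits (H : Subgroup (Equiv.Perm V)) (v w : V) : Prop :=
  w ∉ orb H v ∧ ∀ u : V, u ∈ orb H v ∨ u ∈ orb H w

/-- `N` is a normal subgroup of `G`. -/
def NormalIn (N G : Subgroup (Equiv.Perm V)) : Prop :=
  N ≤ G ∧ ∀ g ∈ G, ∀ x ∈ N, g * x * g⁻¹ ∈ N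

/-- `N` has at most `k` orbits. -/
def AtMostOrbits (N : Subgroup (Equiv.Perm V)) (k : ℕ) : Prop :=
  ∃ f : Fin k → V, ∀ v : V, ∃ i, v ∈ orb N (f i)

/-- `N` has at least three orbits. -/
def AtLeastThreeOrbits (N : Subgroup (Equiv.Perm V)) : Prop :=
  ∃ a b c : V, b ∉ orb N a ∧ c ∉ orb N a ∧ c ∉ orb N b

/-- `G` is quasiprimitive: transitive, and every nontrivial normal subgroup is transitive. -/
def Quasiprimitive (G : Subgroup (Equiv.Perm V)) : Prop :=
  VertexTrans G ∧ ∀ N : Subgroup (Equiv.Perm V), NormalIn N G → N ≠ ⊥ → VertexTrans N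

/-- `G` is bi-quasiprimitive: transitive, every nontrivial normal subgroup has at most
two orbits, and some nontrivial normal subgroup has exactly two orbits. -/
def BiQuasiprimitive (G : Subgroup (Equiv.Perm V)) : Prop :=
  VertexTrans G ∧
    (∀ N : Subgroup (Equiv.Perm V), NormalIn N G → N ≠ ⊥ → AtMostOrbits N 2) ∧
    ∃ N : Subgroup (Equiv.Perm V), NormalIn N G ∧ N ≠ ⊥ ∧ ∃ v w : V, TwoOrbits N v w

/-- `B` is a block for the action of `G`. -/
def IsBlockFor (G : Subgroup (Equiv.Perm V)) (B : Set V) : Prop :=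
  ∀ σ ∈ G, ⇑σ '' B = B ∨ Disjoint (⇑σ '' B) B

/-- `G` is primitive: transitive and every block is trivial. -/
def Primitive (G : Subgroup (Equiv.Perm V)) : Prop :=
  VertexTrans G ∧ ∀ B : Set V, IsBlockFor G B → B.Subsingleton ∨ B = Set.univ

/-- `G` is 2-transitive on the vertices. -/
def TwoTrans (G : Subgroup (Equiv.Perm V)) : Prop :=
  ∀ u v u' v' : V, u ≠ v → u' ≠ v' → ∃ σ ∈ G, σ u = u' ∧ σ v = v'

/-- `G` is 2-transitive on the subset `Δ`. -/
def TwoTransOn (G : Subgroup (Equiv.Perm V)) (Δ : Set V) : Prop :=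
  ∀ u ∈ Δ, ∀ v ∈ Δ, ∀ u' ∈ Δ, ∀ v' ∈ Δ, u ≠ v → u' ≠ v' →
    ∃ σ ∈ G, σ u = u' ∧ σ v = v'

/-- `G` is transitive on the subset `Δ`. -/
def TransOn (G : Subgroup (Equiv.Perm V)) (Δ : Set V) : Prop :=
  ∀ u ∈ Δ, ∀ v ∈ Δ, ∃ σ ∈ G, σ u = v

/-- `G` acts faithfully on the subset `Δ`. -/
def FaithfulOn (G : Subgroup (Equiv.Perm V)) (Δ : Set V) : Prop :=
  ∀ σ ∈ G, (∀ v ∈ Δ, σ v = v) → σ = 1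

/-- `Δ₀, Δ₁` form a bipartition of the graph `Γ`. -/
structure IsBipartition (Γ : SimpleGraph V) (Δ₀ Δ₁ : Set V) : Prop where
  covers : Δ₀ ∪ Δ₁ = Set.univ
  disj : Disjoint Δ₀ Δ₁
  not_adj₀ : ∀ u ∈ Δ₀, ∀ v ∈ Δ₀, ¬Γ.Adj u v
  not_adj₁ : ∀ u ∈ Δ₁, ∀ v ∈ Δ₁, ¬Γ.Adj u v

/-- The setwise stabilizer of `Δ` in `G`. -/
def setStab (G : Subgroup (Equiv.Perm V)) (Δ : Set V) : Subgroup (Equiv.Perm V) where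
  carrier := {σ | σ ∈ G ∧ ⇑σ '' Δ = Δ}
  one_mem' := ⟨G.one_mem, by simp⟩
  mul_mem' := by
    rintro a b ⟨haG, haΔ⟩ ⟨hbG, hbΔ⟩
    refine ⟨G.mul_mem haG hbG, ?_⟩
    rw [show ⇑(a * b) = ⇑a ∘ ⇑b from rfl, Set.image_comp, hbΔ, haΔ]
  inv_mem' := by
    rintro a ⟨haG, haΔ⟩
    refine ⟨G.inv_mem haG, ?_⟩
    conv_lhs => rw [← haΔ]
    rw [show ⇑a⁻¹ = ⇑a.symm from rfl]
    exact Equiv.symm_image_image a Δ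

/-- The subgroup of `G` stabilizing both `Δ₀` and `Δ₁` setwise (`G⁺`). -/
def plusStab (G : Subgroup (Equiv.Perm V)) (Δ₀ Δ₁ : Set V) : Subgroup (Equiv.Perm V) :=
  setStab (setStab G Δ₀) Δ₁

/-- The stabilizer of the point `v` in `G`. -/
def stabPt (G : Subgroup (Equiv.Perm V)) (v : V) : Subgroup (Equiv.Perm V) :=
  setStab G {v}

/-- A transitive group `G` has rank `k`: every point stabilizer has exactly `k` orbits. -/
def HasRank (G : Subgroup (Equiv.Perm V)) (k : ℕ) : Prop :=
  ∀ v : V, ∃ f : Fin k → V,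
    (∀ i j : Fin k, i ≠ j → f j ∉ orb (stabPt G v) (f i)) ∧
    ∀ u : V, ∃ i : Fin k, u ∈ orb (stabPt G v) (f i)

/-- `G` is of affine type over `GF(2)`: it has a regular normal subgroup of exponent 2
(an elementary abelian 2-group); equivalently `G` embeds in `AGL(m,2)` in its natural action. -/
def AffineTypeTwo (G : Subgroup (Equiv.Perm V)) : Prop :=
  ∃ N : Subgroup (Equiv.Perm V), NormalIn N G ∧ RegularOn N ∧ ∀ σ ∈ N, σ * σ = 1

/-- `P` is a `G`-invariant partition of the vertex set. -/
structure IsInvPartition (G : Subgroup (Equiv.Perm V)) (P : Set (Set V)) : Prop where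
  nonempty : ∀ B ∈ P, B.Nonempty
  covers : ∀ v : V, ∃ B ∈ P, v ∈ B
  disj : ∀ B ∈ P, ∀ C ∈ P, B ≠ C → Disjoint B C
  inv : ∀ σ ∈ G, ∀ B ∈ P, ⇑σ '' B ∈ P

/-- `Q` is a block for the induced action of `G` on the partition `P`. -/
def PartBlock (G : Subgroup (Equiv.Perm V)) (P Q : Set (Set V)) : Prop :=
  Q ⊆ P ∧ ∀ σ ∈ G,
    (fun B => ⇑σ '' B) '' Q = Q ∨ Disjoint ((fun B => ⇑σ '' B) '' Q) Q

/-- `G` is transitive on the parts of `P`. -/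
def TransOnParts (G : Subgroup (Equiv.Perm V)) (P : Set (Set V)) : Prop :=
  ∀ B ∈ P, ∀ C ∈ P, ∃ σ ∈ G, ⇑σ '' B = C

/-- The induced action of `G` on the partition `P` is primitive. -/
def PrimitiveOnParts (G : Subgroup (Equiv.Perm V)) (P : Set (Set V)) : Prop :=
  TransOnParts G P ∧ ∀ Q : Set (Set V), PartBlock G P Q → Q.Subsingleton ∨ Q = P

/-- `G` acts faithfully on the partition `P`. -/
def FaithfulOnParts (G : Subgroup (Equiv.Perm V)) (P : Set (Set V)) : Prop :=
  ∀ σ ∈ G, (∀ B ∈ P, ⇑σ '' B = B) → σ = 1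

/-- The induced action of `G` on the partition `P` is 2-transitive. -/
def TwoTransOnParts (G : Subgroup (Equiv.Perm V)) (P : Set (Set V)) : Prop :=
  ∀ B ∈ P, ∀ C ∈ P, ∀ B' ∈ P, ∀ C' ∈ P, B ≠ C → B' ≠ C' →
    ∃ σ ∈ G, ⇑σ '' B = B' ∧ ⇑σ '' C = C'

/-- `H` has exactly two orbits of equal size on the subset `Δ`. -/
def TwoEqualOrbitsOn (H : Subgroup (Equiv.Perm V)) (Δ : Set V) : Prop :=
  ∃ a ∈ Δ, ∃ b ∈ Δ, orb H a ∪ orb H b = Δ ∧ Disjoint (orb H a) (orb H b) ∧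
    (orb H a).ncard = (orb H b).ncard

/-- `G` is almost simple: it has a nonabelian simple normal subgroup with trivial
centralizer, i.e. `S ≤ G ≤ Aut(S)` for a nonabelian simple group `S`. -/
def AlmostSimple (G : Subgroup (Equiv.Perm V)) : Prop :=
  ∃ S : Subgroup (Equiv.Perm V), S ≤ G ∧ (∀ g ∈ G, ∀ s ∈ S, g * s * g⁻¹ ∈ S) ∧
    IsSimpleGroup ↥S ∧ (∃ a ∈ S, ∃ b ∈ S, a * b ≠ b * a) ∧
    ∀ g ∈ G, (∀ s ∈ S, g * s = s * g) → g = 1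

/-- The setoid on `V` whose classes are the orbits of `N`. -/
def orbSetoid (N : Subgroup (Equiv.Perm V)) : Setoid V where
  r u v := ∃ σ ∈ N, σ u = v
  iseqv := by
    refine ⟨fun u => ⟨1, N.one_mem, rfl⟩, ?_, ?_⟩
    · rintro u v ⟨σ, hσ, rfl⟩
      exact ⟨σ⁻¹, N.inv_mem hσ, σ.symm_apply_apply u⟩
    · rintro u v w ⟨σ, hσ, rfl⟩ ⟨τ, hτ, rfl⟩
      exact ⟨τ * σ, N.mul_mem hτ hσ, rfl⟩

/-- The set of orbits of `N` on `V`. -/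
abbrev orbQuot (N : Subgroup (Equiv.Perm V)) : Type _ := Quotient (orbSetoid N)

/-- The orbit of `v`, as a vertex of the quotient. -/
def cls (N : Subgroup (Equiv.Perm V)) (v : V) : orbQuot N := Quotient.mk (orbSetoid N) v

/-- The quotient graph of `Γ` by a partition given as a setoid: parts are adjacent
iff some vertex of one is adjacent to some vertex of the other. -/
def setoidQuot (Γ : SimpleGraph V) (s : Setoid V) : SimpleGraph (Quotient s) where
  Adj A B := A ≠ B ∧ ∃ u v : V, Γ.Adj u v ∧ Quotient.mk s u = A ∧ Quotient.mk s v = B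
  symm := ⟨by
    rintro A B ⟨hne, u, v, h, hu, hv⟩
    exact ⟨hne.symm, v, u, h.symm, hv, hu⟩⟩
  loopless := ⟨by
    rintro A ⟨hne, -⟩
    exact hne rfl⟩

/-- The quotient graph `Γ_N` of `Γ` by the orbits of `N`. -/
def quotGraph (Γ : SimpleGraph V) (N : Subgroup (Equiv.Perm V)) : SimpleGraph (orbQuot N) :=
  setoidQuot Γ (orbSetoid N)

/-- `Γ` is an `r`-cover of the quotient graph `Γ_N`: for every edge `{B,C}` of `Γ_N`
and every `v ∈ B`, `v` has exactly `r` neighbours in `C`. -/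
def IsRCover (Γ : SimpleGraph V) (N : Subgroup (Equiv.Perm V)) (r : ℕ) : Prop :=
  ∀ (v : V) (C : orbQuot N), (quotGraph Γ N).Adj (cls N v) C →
    {u : V | Γ.Adj v u ∧ cls N u = C}.ncard = r

/-! ## The particular graphs -/

/-- The complete multipartite graph with `m` parts of size `b`. -/
def completeMultipartite (m b : ℕ) : SimpleGraph (Fin m × Fin b) :=
  SimpleGraph.fromRel fun u v => u.1 ≠ v.1

/-- `K_{n,n}` minus a perfect matching. -/
def knnMinus (n : ℕ) : SimpleGraph (Fin n ⊕ Fin n) :=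
  SimpleGraph.fromRel fun u v => ∃ i j : Fin n, i ≠ j ∧ u = Sum.inl i ∧ v = Sum.inr j

/-- The graph `G(2p,r)`: bipartite on two copies of `Z_p`, with `x ~ y'` iff `y - x`
lies in the unique subgroup of order `r` of the multiplicative group (the solutions
of `z^r = 1`). -/
def graphG (p r : ℕ) : SimpleGraph (ZMod p ⊕ ZMod p) :=
  SimpleGraph.fromRel fun u v =>
    ∃ x y : ZMod p, u = Sum.inl x ∧ v = Sum.inr y ∧ (y - x) ^ r = 1

/-- The circulant `Cay(p,e) = Cay(Z_p, S)` where `S` is the unique subgroup of order `e`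
of the multiplicative group of `Z_p` (the solutions of `z^e = 1`). -/
def cayCirc (p e : ℕ) : SimpleGraph (ZMod p) :=
  SimpleGraph.fromRel fun x y => (y - x) ^ e = 1

/-- The points (1-dimensional subspaces) of the projective space `PG(d-1,F)`. -/
def projPoint (F : Type*) [Field F] (d : ℕ) : Type _ :=
  {W : Submodule F (Fin d → F) // Module.finrank F W = 1}

/-- The hyperplanes (`(d-1)`-dimensional subspaces) of the projective space `PG(d-1,F)`. -/
def projHyp (F : Type*) [Field F] (d : ℕ) : Type _ :=
  {W : Submodule F (Fin d → F) // Module.finrank F W = d - 1}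

/-- The point-hyperplane incidence graph `B(PG(d-1,q))`. -/
def BPG (F : Type*) [Field F] (d : ℕ) : SimpleGraph (projPoint F d ⊕ projHyp F d) :=
  SimpleGraph.fromRel fun u v => ∃ (A : projPoint F d) (B : projHyp F d),
    u = Sum.inl A ∧ v = Sum.inr B ∧ A.1 ≤ B.1

/-- The point-hyperplane non-incidence graph `B'(PG(d-1,q))`. -/
def BPG' (F : Type*) [Field F] (d : ℕ) : SimpleGraph (projPoint F d ⊕ projHyp F d) :=
  SimpleGraph.fromRel fun u v => ∃ (A : projPoint F d) (B : projHyp F d),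
    u = Sum.inl A ∧ v = Sum.inr B ∧ A.1 ⊓ B.1 = ⊥

/-- The nonzero quadratic residues modulo 11. -/
def quadRes11 : Set (ZMod 11) := {1, 3, 4, 5, 9}

/-- The graph `B'(H(11))`: vertices are `Z_11` (left part) together with the translates
`R + i` of the residues `R` (right part, indexed by `i`), with `x` adjacent to `R + i`
iff `x ∉ R + i`. -/
def BH11' : SimpleGraph (ZMod 11 ⊕ ZMod 11) :=
  SimpleGraph.fromRel fun u v =>
    ∃ x i : ZMod 11, u = Sum.inl x ∧ v = Sum.inr i ∧ x - i ∉ quadRes11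

/-- The Hamming graph `H(2,4)`. -/
def hamming24 : SimpleGraph (Fin 4 × Fin 4) :=
  SimpleGraph.fromRel fun u v => (u.1 = v.1 ∧ u.2 ≠ v.2) ∨ (u.1 ≠ v.1 ∧ u.2 = v.2)

/-- The Petersen graph: the Kneser graph on 2-subsets of a 5-set. -/
def petersen : SimpleGraph {s : Finset (Fin 5) // s.card = 2} :=
  SimpleGraph.fromRel fun u v => Disjoint u.1 v.1

/-- The 5-dimensional hypercube graph. -/
def cube5 : SimpleGraph (Fin 5 → ZMod 2) :=
  SimpleGraph.fromRel fun x y => ∃! i : Fin 5, x i ≠ y i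

/-- The antipodal pairing on the 5-cube. -/
def antipodal5 : Setoid (Fin 5 → ZMod 2) where
  r x y := y = x ∨ y = x + 1
  iseqv := by
    have key : ∀ x : Fin 5 → ZMod 2, x + 1 + 1 = x := by
      intro x
      funext i
      show x i + 1 + 1 = x i
      have h : (1 + 1 : ZMod 2) = 0 := by decide
      rw [add_assoc, h, add_zero]
    refine ⟨fun x => Or.inl rfl, ?_, ?_⟩
    · rintro x y (rfl | rfl)
      · exact Or.inl rfl
      · exact Or.inr (key x).symm
    · rintro x y z (rfl | rfl) h2
      · exact h2
      · rcases h2 with rfl | rfl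
        · exact Or.inr rfl
        · exact Or.inl (key x)

/-- The folded 5-cube: the quotient of the 5-cube by the antipodal pairing. -/
def foldedCube5 : SimpleGraph (Quotient antipodal5) := setoidQuot cube5 antipodal5

/-- The Clebsch graph: the complement of the folded 5-cube. -/
def clebsch : SimpleGraph (Quotient antipodal5) := foldedCube5ᶜ

/-- The standard double cover of `Γ`. -/
def doubleCover (Γ : SimpleGraph V) : SimpleGraph (V × Bool) :=
  SimpleGraph.fromRel fun u v => Γ.Adj u.1 v.1 ∧ u.2 = true ∧ v.2 = false

/-- The swap `(x,i) ↦ (x, 3-i)` of the two levels of the standard double cover. -/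
def swapPerm (V : Type*) : Equiv.Perm (V × Bool) :=
  Equiv.prodCongr (Equiv.refl V) ⟨Bool.not, Bool.not, Bool.not_not, Bool.not_not⟩

/-- The Cayley graph of a group with connection set `S` (edges `{g, s*g}`). -/
def cayleyGraph {T : Type*} [Group T] (S : Set T) : SimpleGraph T :=
  SimpleGraph.fromRel fun g h => ∃ s ∈ S, h = s * g

/-! ## `PGL` and `PΓL` acting on projective points -/

/-- `g` is a `τ`-semilinear bijection. -/
def IsSemilinearBij (F : Type*) [Field F] (d : ℕ) (τ : F ≃+* F)
    (g : (Fin d → F) ≃ (Fin d → F)) : Prop :=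
  (∀ x y : Fin d → F, g (x + y) = g x + g y) ∧
  ∀ (c : F) (x : Fin d → F), g (c • x) = τ c • g x

/-- `g` is a linear bijection. -/
def IsLinearBij (F : Type*) [Field F] (d : ℕ) (g : (Fin d → F) ≃ (Fin d → F)) : Prop :=
  (∀ x y : Fin d → F, g (x + y) = g x + g y) ∧
  ∀ (c : F) (x : Fin d → F), g (c • x) = c • g x

/-- The permutation `π` of the projective points is induced by the bijection `g`. -/
def inducesProjMap (F : Type*) [Field F] (d : ℕ) (g : (Fin d → F) ≃ (Fin d → F))
    (π : Equiv.Perm (projPoint F d)) : Prop :=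
  ∀ W : projPoint F d, ((π W).1 : Set (Fin d → F)) = ⇑g '' ((W.1 : Submodule F (Fin d → F)) : Set (Fin d → F))

/-- `PΓL(d,F)` as a permutation group on the projective points: the permutations induced
by semilinear bijections. -/
def PGammaL (F : Type*) [Field F] (d : ℕ) : Subgroup (Equiv.Perm (projPoint F d)) where
  carrier := {π | ∃ (τ : F ≃+* F) (g : (Fin d → F) ≃ (Fin d → F)),
    IsSemilinearBij F d τ g ∧ inducesProjMap F d g π}
  one_mem' := ⟨RingEquiv.refl F, Equiv.refl _, ⟨fun _ _ => rfl, fun _ _ => rfl⟩,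
    fun W => by simp [inducesProjMap]⟩
  mul_mem' := by
    rintro a b ⟨τa, ga, ⟨haAdd, haSmul⟩, hIa⟩ ⟨τb, gb, ⟨hbAdd, hbSmul⟩, hIb⟩
    refine ⟨τb.trans τa, gb.trans ga, ⟨?_, ?_⟩, ?_⟩
    · intro x y
      simp only [Equiv.trans_apply, hbAdd, haAdd]
    · intro c x
      simp only [Equiv.trans_apply, hbSmul, haSmul, RingEquiv.trans_apply]
    · intro W
      have h2 := hIa (b W)
      have h := hIb W
      rw [show ((a * b) W) = a (b W) from rfl, h2, h,
        show ⇑(gb.trans ga) = ⇑ga ∘ ⇑gb from rfl, Set.image_comp]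
  inv_mem' := by
    rintro a ⟨τ, g, ⟨hAdd, hSmul⟩, hI⟩
    refine ⟨τ.symm, g.symm, ⟨?_, ?_⟩, ?_⟩
    · intro x y
      apply g.injective
      rw [hAdd, Equiv.apply_symm_apply, Equiv.apply_symm_apply, Equiv.apply_symm_apply]
    · intro c x
      apply g.injective
      rw [hSmul, Equiv.apply_symm_apply, Equiv.apply_symm_apply,
        RingEquiv.apply_symm_apply]
    · intro W
      have h := hI (a⁻¹ W)
      rw [show a (a⁻¹ W) = W from a.apply_symm_apply W] at h
      rw [h, Equiv.symm_image_image]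

/-- `PGL(d,F)` as a permutation group on the projective points: the permutations induced
by linear bijections. -/
def PGLsub (F : Type*) [Field F] (d : ℕ) : Subgroup (Equiv.Perm (projPoint F d)) where
  carrier := {π | ∃ g : (Fin d → F) ≃ (Fin d → F), IsLinearBij F d g ∧ inducesProjMap F d g π}
  one_mem' := ⟨Equiv.refl _, ⟨fun _ _ => rfl, fun _ _ => rfl⟩, fun W => by simp [inducesProjMap]⟩
  mul_mem' := by
    rintro a b ⟨ga, ⟨haAdd, haSmul⟩, hIa⟩ ⟨gb, ⟨hbAdd, hbSmul⟩, hIb⟩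
    refine ⟨gb.trans ga, ⟨?_, ?_⟩, ?_⟩
    · intro x y
      simp only [Equiv.trans_apply, hbAdd, haAdd]
    · intro c x
      simp only [Equiv.trans_apply, hbSmul, haSmul]
    · intro W
      have h2 := hIa (b W)
      have h := hIb W
      rw [show ((a * b) W) = a (b W) from rfl, h2, h,
        show ⇑(gb.trans ga) = ⇑ga ∘ ⇑gb from rfl, Set.image_comp]
  inv_mem' := by
    rintro a ⟨g, ⟨hAdd, hSmul⟩, hI⟩
    refine ⟨g.symm, ⟨?_, ?_⟩, ?_⟩
    · intro x y
      apply g.injective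
      rw [hAdd, Equiv.apply_symm_apply, Equiv.apply_symm_apply, Equiv.apply_symm_apply]
    · intro c x
      apply g.injective
      rw [hSmul, Equiv.apply_symm_apply, Equiv.apply_symm_apply]
    · intro W
      have h := hI (a⁻¹ W)
      rw [show a (a⁻¹ W) = W from a.apply_symm_apply W] at h
      rw [h, Equiv.symm_image_image]

/-- The graphs appearing in the main theorem (Theorem 1.1 (a)-(g)). -/
def IsBasicGraph {W : Type*} (Δ : SimpleGraph W) : Prop :=
  (∃ n : ℕ, 2 ≤ n ∧ Nonempty (Δ ≃g completeBipartiteGraph (Fin n) (Fin n))) ∨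
  (∃ n : ℕ, 3 ≤ n ∧ Nonempty (Δ ≃g (⊤ : SimpleGraph (Fin n)))) ∨
  (∃ n : ℕ, 3 ≤ n ∧ Nonempty (Δ ≃g completeMultipartite n 2)) ∨
  (∃ n : ℕ, 3 ≤ n ∧ Nonempty (Δ ≃g knnMinus n)) ∨
  (∃ p e : ℕ, p.Prime ∧ 1 < e ∧ e ∣ p - 1 ∧ Nonempty (Δ ≃g graphG p e)) ∨
  (∃ (F : Type) (iF : Field F) (_ : Finite F) (d : ℕ), 3 ≤ d ∧
    (Nonempty (Δ ≃g @BPG F iF d) ∨ Nonempty (Δ ≃g @BPG' F iF d))) ∨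
  (∃ p e : ℕ, p.Prime ∧ 2 ∣ e ∧ e ∣ p - 1 ∧ Nonempty (Δ ≃g cayCirc p e)) ∨
  Nonempty (Δ ≃g BH11') ∨
  (Nonempty (Δ ≃g petersen) ∨ Nonempty (Δ ≃g petersenᶜ)) ∨
  (Nonempty (Δ ≃g hamming24) ∨ Nonempty (Δ ≃g hamming24ᶜ)) ∨
  (Nonempty (Δ ≃g clebsch) ∨ Nonempty (Δ ≃g clebschᶜ))

end ATB

/-!
Arc-transitivity makes all edges alike. If one edge lay inside an `N`-orbit, all would, and
connectivity would leave a single orbit; so every vertex has the same number `r` of neighbours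
in each adjacent orbit, and its neighbourhood splits into blocks of size `r`. The kernel of `G`
on the `N`-orbits is normal, contains `N` and has the same orbits as `N`, so maximality makes
it `N`; a normal subgroup strictly above `N` has at most two orbits, which gives
(bi-)quasiprimitivity. A generator `g` of `H` induces an automorphism `π` of `Γ_N`. Either
`π` is transitive, hence of order `|Γ_N|`, or its two orbits come from the two `H`-orbits;
these have length `|H|` and are unions of `N`-orbits of a common size, so both `π`-orbits
have the same length, which is then the order of `π`, and `Γ_N` is a bicirculant.
-/

theorem Set.ncard_eq_ncard_image_mul {α β : Type*} {s : Set α} (hs : s.Finite) (f : α → β)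
    {r : ℕ} (hr : ∀ a ∈ s, {x ∈ s | f x = f a}.ncard = r) : s.ncard = (f '' s).ncard * r := by
  classical
  obtain ⟨t, rfl⟩ := hs.exists_finset_coe
  have hfiber : ∀ b ∈ t.image f, {x ∈ t | f x = b}.card = r := by
    rintro b hb
    obtain ⟨a, ha, rfl⟩ := Finset.mem_image.mp hb
    rw [← hr a ha, ← Set.ncard_coe_finset, Finset.coe_filter]
    rfl
  rw [← Finset.coe_image, Set.ncard_coe_finset, Set.ncard_coe_finset,
    Finset.card_eq_sum_card_image f t, Finset.sum_congr rfl hfiber, Finset.sum_const,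
    smul_eq_mul]

theorem MulAction.period_pow_smul {G α : Type*} [Group G] [MulAction G α] (g : G) (k : ℕ)
    (a : α) : period g (g ^ k • a) = period g a := by
  have h : ∀ n, period g (g ^ k • a) ∣ n ↔ period g a ∣ n := fun n => by
    rw [← pow_smul_eq_iff_period_dvd, ← pow_smul_eq_iff_period_dvd, smul_smul, ← pow_add,
      add_comm, pow_add, mul_smul, smul_left_cancel_iff]
  exact Nat.dvd_antisymm ((h _).mpr dvd_rfl) ((h _).mp dvd_rfl)

section PermOrbits

open MulAction

variable {X : Type*} (π : Equiv.Perm X)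

theorem Equiv.Perm.orderOf_eq_period_of_forall (A : X) (h : ∀ B : X, period π B = period π A) :
    orderOf π = period π A := by
  refine Nat.dvd_antisymm (orderOf_dvd_of_pow_eq_one ?_) (period_dvd_orderOf π A)
  ext B
  simpa [h B] using pow_period_smul π B

theorem Equiv.Perm.ncard_setOf_pow_apply_eq [Finite X] (A : X) :
    {B | ∃ k : ℕ, (π ^ k) A = B}.ncard = period π A := by
  have hpos : 0 < period π A := period_pos_of_orderOf_pos (orderOf_pos π) A
  have horbit : {B | ∃ k : ℕ, (π ^ k) A = B} = (fun k => (π ^ k) A) '' Set.Iio (period π A) := by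
    ext B
    constructor
    · rintro ⟨k, rfl⟩
      exact ⟨k % period π A, Nat.mod_lt k hpos, pow_mod_period_smul k (m := π) (a := A)⟩
    · rintro ⟨k, -, rfl⟩
      exact ⟨k, rfl⟩
  rw [horbit, Set.InjOn.ncard_image, Set.ncard_Iio_nat]
  exact Function.iterate_injOn_Iio_minimalPeriod

theorem Equiv.Perm.orderOf_eq_card_of_forall_exists_pow_apply_eq [Finite X] (A : X)
    (hcover : ∀ B, ∃ k : ℕ, (π ^ k) A = B) : orderOf π = Nat.card X := by
  have hper : ∀ B, period π B = period π A := fun B => by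
    obtain ⟨k, rfl⟩ := hcover B
    exact period_pow_smul π k A
  have horbit : {B | ∃ k : ℕ, (π ^ k) A = B} = _root_.Set.univ := Set.eq_univ_of_forall hcover
  rw [π.orderOf_eq_period_of_forall A hper, ← π.ncard_setOf_pow_apply_eq, horbit,
    Set.ncard_univ]

theorem Equiv.Perm.two_mul_orderOf_eq_card [Finite X] (A B : X)
    (hcover : ∀ U, (∃ k : ℕ, (π ^ k) A = U) ∨ ∃ k : ℕ, (π ^ k) B = U)
    (hdisj : ∀ i j : ℕ, (π ^ i) A ≠ (π ^ j) B) (hAB : period π A = period π B) :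
    2 * orderOf π = Nat.card X := by
  have hper : ∀ U, period π U = period π A := fun U => by
    rcases hcover U with ⟨k, rfl⟩ | ⟨k, rfl⟩
    · exact period_pow_smul π k A
    · exact (period_pow_smul π k B).trans hAB.symm
  have hunion :
      {U | ∃ k : ℕ, (π ^ k) A = U} ∪ {U | ∃ k : ℕ, (π ^ k) B = U} = _root_.Set.univ :=
    Set.eq_univ_of_forall hcover
  have hdisjoint :
      _root_.Disjoint {U | ∃ k : ℕ, (π ^ k) A = U} {U | ∃ k : ℕ, (π ^ k) B = U} :=
    Set.disjoint_left.mpr fun _ ⟨i, hi⟩ ⟨j, hj⟩ => hdisj i j (hi.trans hj.symm)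
  rw [← Set.ncard_univ, ← hunion, Set.ncard_union_eq hdisjoint, π.ncard_setOf_pow_apply_eq,
    π.ncard_setOf_pow_apply_eq, π.orderOf_eq_period_of_forall A hper, hAB, two_mul]

end PermOrbits

namespace ATB

variable {V : Type*}

section Quotient

variable {G N : Subgroup (Equiv.Perm V)}

theorem cls_eq_cls_iff {u w : V} : cls N u = cls N w ↔ w ∈ orb N u :=
  Quotient.eq

theorem orb_apply_eq_image (hNn : NormalIn N G) {σ : Equiv.Perm V} (hσ : σ ∈ G) (u : V) :
    orb N (σ u) = σ '' orb N u := by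
  ext x
  constructor
  · rintro ⟨n, hn, rfl⟩
    exact ⟨(σ⁻¹ * n * σ) u, ⟨_, hNn.2 σ⁻¹ (G.inv_mem hσ) n hn, rfl⟩, by simp⟩
  · rintro ⟨_, ⟨n, hn, rfl⟩, rfl⟩
    exact ⟨σ * n * σ⁻¹, hNn.2 σ hσ n hn, by simp⟩

theorem apply_mem_orb_apply_iff (hNn : NormalIn N G) {σ : Equiv.Perm V} (hσ : σ ∈ G)
    {u w : V} : σ w ∈ orb N (σ u) ↔ w ∈ orb N u := by
  rw [orb_apply_eq_image hNn hσ, σ.injective.mem_set_image]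

theorem cls_apply_eq_cls_apply_iff (hNn : NormalIn N G) {σ : Equiv.Perm V} (hσ : σ ∈ G)
    {u w : V} : cls N (σ u) = cls N (σ w) ↔ cls N u = cls N w := by
  rw [cls_eq_cls_iff, cls_eq_cls_iff, apply_mem_orb_apply_iff hNn hσ]

def quotPerm (hNn : NormalIn N G) {σ : Equiv.Perm V} (hσ : σ ∈ G) :
    Equiv.Perm (orbQuot N) :=
  Quotient.congr σ fun _ _ => (apply_mem_orb_apply_iff hNn hσ).symm

@[simp]
theorem quotPerm_cls (hNn : NormalIn N G) {σ : Equiv.Perm V} (hσ : σ ∈ G) (v : V) :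
    quotPerm hNn hσ (cls N v) = cls N (σ v) :=
  rfl

theorem quotPerm_pow_cls (hNn : NormalIn N G) {σ : Equiv.Perm V} (hσ : σ ∈ G) (k : ℕ) (v : V) :
    (quotPerm hNn hσ ^ k) (cls N v) = cls N ((σ ^ k) v) := by
  induction k generalizing v with
  | zero => rfl
  | succ k ih => rw [pow_succ, pow_succ, Equiv.Perm.mul_apply, quotPerm_cls, ih]; rfl

theorem quotGraph_adj_cls_apply {Γ : SimpleGraph V} (hG : G ≤ autGroup Γ) (hNn : NormalIn N G)
    {σ : Equiv.Perm V} (hσ : σ ∈ G) {x y : V} (h : (quotGraph Γ N).Adj (cls N x) (cls N y)) :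
    (quotGraph Γ N).Adj (cls N (σ x)) (cls N (σ y)) := by
  obtain ⟨hne, u, w, huw, hu, hw⟩ := h
  exact ⟨fun h => hne ((cls_apply_eq_cls_apply_iff hNn hσ).mp h), σ u, σ w, (hG hσ u w).mpr huw,
    (cls_apply_eq_cls_apply_iff hNn hσ).mpr hu, (cls_apply_eq_cls_apply_iff hNn hσ).mpr hw⟩

theorem quotPerm_mem_autGroup {Γ : SimpleGraph V} (hG : G ≤ autGroup Γ) (hNn : NormalIn N G)
    {σ : Equiv.Perm V} (hσ : σ ∈ G) : quotPerm hNn hσ ∈ autGroup (quotGraph Γ N) := by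
  intro A B
  induction A, B using Quotient.inductionOn₂ with
  | _ x y =>
    change (quotGraph Γ N).Adj (cls N (σ x)) (cls N (σ y)) ↔
      (quotGraph Γ N).Adj (cls N x) (cls N y)
    refine ⟨fun h => ?_, quotGraph_adj_cls_apply hG hNn hσ⟩
    simpa using quotGraph_adj_cls_apply hG hNn (G.inv_mem hσ) h

def quotKernel (G N : Subgroup (Equiv.Perm V)) : Subgroup (Equiv.Perm V) where
  carrier := {σ | σ ∈ G ∧ ∀ v, cls N (σ v) = cls N v}
  one_mem' := ⟨G.one_mem, fun _ => rfl⟩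
  mul_mem' := fun ⟨ha, ha'⟩ ⟨hb, hb'⟩ => ⟨G.mul_mem ha hb, fun v => (ha' _).trans (hb' v)⟩
  inv_mem' := fun {a} ⟨ha, ha'⟩ => ⟨G.inv_mem ha, fun v => by
    simpa using (ha' (a⁻¹ v)).symm⟩

theorem le_quotKernel (hNn : NormalIn N G) : N ≤ quotKernel G N :=
  fun n hn => ⟨hNn.1 hn, fun _ => (cls_eq_cls_iff.mpr ⟨n, hn, rfl⟩).symm⟩

theorem normalIn_quotKernel (hNn : NormalIn N G) : NormalIn (quotKernel G N) G := by
  refine ⟨fun σ hσ => hσ.1, fun g hg x ⟨hx, hx'⟩ => ⟨G.mul_mem (G.mul_mem hg hx) (G.inv_mem hg),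
    fun v => ?_⟩⟩
  have h := (cls_apply_eq_cls_apply_iff hNn hg).mpr (hx' (g⁻¹ v))
  simpa using h

theorem orb_quotKernel (hNn : NormalIn N G) (v : V) : orb (quotKernel G N) v = orb N v := by
  refine Set.Subset.antisymm ?_ fun x ⟨n, hn, hx⟩ => ⟨n, le_quotKernel hNn hn, hx⟩
  rintro _ ⟨σ, ⟨-, hσ⟩, rfl⟩
  exact cls_eq_cls_iff.mp (hσ v).symm

theorem mem_of_forall_cls_apply_eq (hNn : NormalIn N G) (hN3 : AtLeastThreeOrbits N)
    (hmax : ∀ M : Subgroup (Equiv.Perm V), NormalIn M G → N ≤ M →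
      AtLeastThreeOrbits M → M = N)
    {σ : Equiv.Perm V} (hσ : σ ∈ G) (hfix : ∀ v, cls N (σ v) = cls N v) : σ ∈ N := by
  have hK3 : AtLeastThreeOrbits (quotKernel G N) := by
    simpa only [AtLeastThreeOrbits, orb_quotKernel hNn] using hN3
  rw [← hmax _ (normalIn_quotKernel hNn) (le_quotKernel hNn) hK3]
  exact ⟨hσ, hfix⟩

end Quotient

section ArcTransitive

variable {Γ : SimpleGraph V} {G N : Subgroup (Equiv.Perm V)}

theorem VertexTrans.of_arcTrans [Nontrivial V] (hconn : Γ.Connected) (hat : ArcTrans Γ G) :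
    VertexTrans G := by
  intro u v
  obtain ⟨u', hu⟩ := hconn.preconnected.exists_adj_of_nontrivial u
  obtain ⟨v', hv⟩ := hconn.preconnected.exists_adj_of_nontrivial v
  obtain ⟨σ, hσ, huv, -⟩ := hat u u' v v' hu hv
  exact ⟨σ, hσ, huv⟩

theorem cls_ne_cls_of_adj (hNn : NormalIn N G) (hconn : Γ.Connected) (hat : ArcTrans Γ G)
    (hN2 : ∃ a b : V, cls N a ≠ cls N b) {x y : V} (hxy : Γ.Adj x y) : cls N x ≠ cls N y := by
  intro hcls
  have hall : ∀ u w, Γ.Adj u w → cls N u = cls N w := fun u w huw => by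
    obtain ⟨σ, hσ, rfl, rfl⟩ := hat x y u w hxy huw
    exact (cls_apply_eq_cls_apply_iff hNn hσ).mpr hcls
  obtain ⟨a, b, hab⟩ := hN2
  obtain ⟨p⟩ := hconn.preconnected a b
  induction p with
  | nil => exact hab rfl
  | cons h _ ih => exact ih fun h' => hab ((hall _ _ h).trans h')

theorem ncard_adj_cls_apply (hG : G ≤ autGroup Γ) (hNn : NormalIn N G) {σ : Equiv.Perm V}
    (hσ : σ ∈ G) (v w : V) :
    {u | Γ.Adj (σ v) u ∧ cls N u = cls N (σ w)}.ncard =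
      {u | Γ.Adj v u ∧ cls N u = cls N w}.ncard := by
  have himage : {u | Γ.Adj (σ v) u ∧ cls N u = cls N (σ w)} =
      σ '' {u | Γ.Adj v u ∧ cls N u = cls N w} := by
    ext x
    rw [← σ.apply_symm_apply x, σ.injective.mem_set_image]
    simp only [Set.mem_ofPred_eq, hG hσ v, cls_apply_eq_cls_apply_iff hNn hσ]
  rw [himage, Set.ncard_image_of_injective _ σ.injective]

theorem isRCover_of_arcTrans (hG : G ≤ autGroup Γ) (hNn : NormalIn N G) (hat : ArcTrans Γ G)
    {u₀ w₀ : V} (h₀ : Γ.Adj u₀ w₀) :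
    IsRCover Γ N {u | Γ.Adj u₀ u ∧ cls N u = cls N w₀}.ncard := by
  rintro v C ⟨-, x, y, hxy, hx, rfl⟩
  obtain ⟨σ, hσ, rfl, rfl⟩ := hat u₀ w₀ x y h₀ hxy
  obtain ⟨n, hn, rfl⟩ := cls_eq_cls_iff.mp hx
  have hnw : cls N (n (σ w₀)) = cls N (σ w₀) := (cls_eq_cls_iff.mpr ⟨n, hn, rfl⟩).symm
  change {u | Γ.Adj (n (σ u₀)) u ∧ cls N u = cls N (σ w₀)}.ncard = _
  rw [← hnw, ncard_adj_cls_apply hG hNn (hNn.1 hn), ncard_adj_cls_apply hG hNn hσ]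

theorem dvd_ncard_neighborSet_of_isRCover [Finite V] {r : ℕ} (hr : IsRCover Γ N r)
    (hcross : ∀ x y, Γ.Adj x y → cls N x ≠ cls N y) (v : V) :
    r ∣ (Γ.neighborSet v).ncard := by
  rw [Set.ncard_eq_ncard_image_mul (Set.toFinite (Γ.neighborSet v)) (cls N) fun u hu =>
    hr v (cls N u) ⟨hcross v u hu, v, u, hu, rfl, rfl⟩]
  exact dvd_mul_left r _

theorem quotGraph_arcTrans (hNn : NormalIn N G) (hat : ArcTrans Γ G) :
    ∀ u v u' v' : V, (quotGraph Γ N).Adj (cls N u) (cls N v) →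
      (quotGraph Γ N).Adj (cls N u') (cls N v') →
      ∃ σ ∈ G, cls N (σ u) = cls N u' ∧ cls N (σ v) = cls N v' := by
  rintro u v u' v' ⟨-, x, y, hxy, hx, hy⟩ ⟨-, x', y', hxy', hx', hy'⟩
  obtain ⟨σ, hσ, rfl, rfl⟩ := hat x y x' y' hxy hxy'
  exact ⟨σ, hσ, ((cls_apply_eq_cls_apply_iff hNn hσ).mpr hx).symm.trans hx',
    ((cls_apply_eq_cls_apply_iff hNn hσ).mpr hy).symm.trans hy'⟩

end ArcTransitive

section Cyclic

variable {Γ : SimpleGraph V} {G N H : Subgroup (Equiv.Perm V)}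

theorem exists_pow_eq_of_isCyclic [Finite V] (hcyc : IsCyclic H) :
    ∃ g ∈ H, ∀ σ ∈ H, ∃ k : ℕ, g ^ k = σ := by
  obtain ⟨g, hg⟩ := IsCyclic.exists_monoid_generator (α := H)
  refine ⟨g, g.2, fun σ hσ => ?_⟩
  obtain ⟨k, hk⟩ := hg ⟨σ, hσ⟩
  exact ⟨k, congrArg Subtype.val hk⟩

theorem ncard_orb_of_semiregular (hsemi : Semiregular H) (v : V) :
    (orb H v).ncard = Nat.card H := by
  have hrange : orb H v = Set.range fun σ : H => (σ : Equiv.Perm V) v := by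
    ext w
    exact ⟨fun ⟨σ, hσ, hw⟩ => ⟨⟨σ, hσ⟩, hw⟩, fun ⟨σ, hw⟩ => ⟨σ, σ.2, hw⟩⟩
  rw [hrange, Set.ncard_range_of_injective]
  intro σ τ hστ
  by_contra hne
  refine hsemi (τ⁻¹ * σ) (H.mul_mem (H.inv_mem τ.2) σ.2) ?_ v ?_
  · exact fun h => hne (Subtype.ext (inv_mul_eq_one.mp h).symm)
  · simp [Equiv.Perm.mul_apply, hστ]

theorem exists_mem_cls_apply_eq_of_forall (hNn : NormalIn N G) (hH : H ≤ G) {v₀ : V}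
    (hreach : ∀ w, ∃ ρ ∈ H, cls N (ρ v₀) = cls N w) (a w : V) :
    ∃ ρ ∈ H, cls N (ρ a) = cls N w := by
  obtain ⟨ρa, hρa, ha⟩ := hreach a
  obtain ⟨ρw, hρw, hw⟩ := hreach w
  refine ⟨ρw * ρa⁻¹, H.mul_mem hρw (H.inv_mem hρa), ?_⟩
  have hv₀ : cls N v₀ = cls N (ρa⁻¹ a) := by
    simpa using (cls_apply_eq_cls_apply_iff hNn (hH (H.inv_mem hρa))).mpr ha
  exact ((cls_apply_eq_cls_apply_iff hNn (hH hρw)).mpr hv₀).symm.trans hw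

theorem isCirculant_quotGraph [Finite V] [Nonempty V] (hG : G ≤ autGroup Γ)
    (hNn : NormalIn N G) {g : Equiv.Perm V} (hg : g ∈ G)
    (htrans : ∀ a w : V, ∃ k : ℕ, cls N ((g ^ k) a) = cls N w) :
    IsCirculant (quotGraph Γ N) := by
  have hπ : ∀ A B : orbQuot N, ∃ k : ℕ, (quotPerm hNn hg ^ k) A = B := by
    refine fun A B => Quotient.inductionOn₂ A B fun a w => ?_
    obtain ⟨k, hk⟩ := htrans a w
    exact ⟨k, (quotPerm_pow_cls hNn hg k a).trans hk⟩
  exact ⟨quotPerm hNn hg, quotPerm_mem_autGroup hG hNn hg,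
    (quotPerm hNn hg).orderOf_eq_card_of_forall_exists_pow_apply_eq _
      (hπ (cls N (Classical.arbitrary V))), hπ⟩

theorem ncard_orb_eq_period_mul [Finite V] (hNn : NormalIn N G) {g : Equiv.Perm V} (hg : g ∈ G)
    (hgH : g ∈ H) (hgen : ∀ σ ∈ H, ∃ k : ℕ, g ^ k = σ) {v : V}
    (hblock : ∀ u ∈ orb H v, orb N u ⊆ orb H v) {m : ℕ} (hm : ∀ u, (orb N u).ncard = m) :
    (orb H v).ncard = MulAction.period (quotPerm hNn hg) (cls N v) * m := by
  have himage : cls N '' orb H v = {B | ∃ k : ℕ, (quotPerm hNn hg ^ k) (cls N v) = B} := by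
    ext B
    constructor
    · rintro ⟨_, ⟨σ, hσ, rfl⟩, rfl⟩
      obtain ⟨k, rfl⟩ := hgen σ hσ
      exact ⟨k, quotPerm_pow_cls hNn hg k v⟩
    · rintro ⟨k, rfl⟩
      exact ⟨(g ^ k) v, ⟨g ^ k, H.pow_mem hgH k, rfl⟩, (quotPerm_pow_cls hNn hg k v).symm⟩
  have hfiber : ∀ u ∈ orb H v, {x ∈ orb H v | cls N x = cls N u}.ncard = m := fun u hu => by
    rw [← hm u]
    congr 1
    ext x
    exact ⟨fun ⟨_, hx⟩ => cls_eq_cls_iff.mp hx.symm,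
      fun hx => ⟨hblock u hu hx, (cls_eq_cls_iff.mpr hx).symm⟩⟩
  rw [Set.ncard_eq_ncard_image_mul (Set.toFinite _) (cls N) hfiber, himage,
    Equiv.Perm.ncard_setOf_pow_apply_eq]

theorem period_quotPerm_cls_eq [Finite V] (hNn : NormalIn N G) (hvt : VertexTrans G)
    (hH : H ≤ G) (hsemi : Semiregular H) {g : Equiv.Perm V} (hgH : g ∈ H)
    (hgen : ∀ σ ∈ H, ∃ k : ℕ, g ^ k = σ) {v₀ v₁ : V} (h2orb : TwoOrbits H v₀ v₁)
    (hsep : ∀ σ ∈ H, ∀ τ ∈ H, cls N (σ v₀) ≠ cls N (τ v₁)) :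
    MulAction.period (quotPerm hNn (hH hgH)) (cls N v₀) =
      MulAction.period (quotPerm hNn (hH hgH)) (cls N v₁) := by
  have hm : ∀ u, (orb N u).ncard = (orb N v₀).ncard := fun u => by
    obtain ⟨σ, hσ, rfl⟩ := hvt v₀ u
    rw [orb_apply_eq_image hNn hσ, Set.ncard_image_of_injective _ σ.injective]
  have hm_pos : 0 < (orb N v₀).ncard := (Set.ncard_pos).mpr ⟨v₀, 1, N.one_mem, rfl⟩
  have hblock₀ : ∀ u ∈ orb H v₀, orb N u ⊆ orb H v₀ := by
    rintro _ ⟨σ, hσ, rfl⟩ x hx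
    refine (h2orb.2 x).resolve_right ?_
    rintro ⟨τ, hτ, rfl⟩
    exact hsep σ hσ τ hτ (cls_eq_cls_iff.mpr hx)
  have hblock₁ : ∀ u ∈ orb H v₁, orb N u ⊆ orb H v₁ := by
    rintro _ ⟨τ, hτ, rfl⟩ x hx
    refine (h2orb.2 x).resolve_left ?_
    rintro ⟨σ, hσ, rfl⟩
    exact hsep σ hσ τ hτ (cls_eq_cls_iff.mpr hx).symm
  refine Nat.eq_of_mul_eq_mul_right hm_pos ?_
  rw [← ncard_orb_eq_period_mul hNn _ hgH hgen hblock₀ hm,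
    ← ncard_orb_eq_period_mul hNn _ hgH hgen hblock₁ hm,
    ncard_orb_of_semiregular hsemi, ncard_orb_of_semiregular hsemi]

theorem isBicirculant_quotGraph [Finite V] (hG : G ≤ autGroup Γ) (hNn : NormalIn N G)
    (hvt : VertexTrans G) (hH : H ≤ G) (hsemi : Semiregular H) {g : Equiv.Perm V} (hgH : g ∈ H)
    (hgen : ∀ σ ∈ H, ∃ k : ℕ, g ^ k = σ) {v₀ v₁ : V} (h2orb : TwoOrbits H v₀ v₁)
    (hsep : ∀ σ ∈ H, ∀ τ ∈ H, cls N (σ v₀) ≠ cls N (τ v₁)) :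
    IsBicirculant (quotGraph Γ N) := by
  set π := quotPerm hNn (hH hgH)
  have hπ : ∀ k v, (π ^ k) (cls N v) = cls N ((g ^ k) v) := quotPerm_pow_cls hNn (hH hgH)
  have hcover : ∀ U, (∃ k : ℕ, (π ^ k) (cls N v₀) = U) ∨ ∃ k : ℕ, (π ^ k) (cls N v₁) = U := by
    refine fun U => Quotient.inductionOn U fun w => ?_
    rcases h2orb.2 w with ⟨σ, hσ, rfl⟩ | ⟨σ, hσ, rfl⟩ <;> obtain ⟨k, rfl⟩ := hgen σ hσ
    exacts [Or.inl ⟨k, hπ k v₀⟩, Or.inr ⟨k, hπ k v₁⟩]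
  have hdisj : ∀ i j : ℕ, (π ^ i) (cls N v₀) ≠ (π ^ j) (cls N v₁) := fun i j => by
    rw [hπ, hπ]
    exact hsep _ (H.pow_mem hgH i) _ (H.pow_mem hgH j)
  refine ⟨π, quotPerm_mem_autGroup hG hNn _,
    π.two_mul_orderOf_eq_card _ _ hcover hdisj
      (period_quotPerm_cls_eq hNn hvt hH hsemi hgH hgen h2orb hsep),
    cls N v₀, cls N v₁, hcover, fun k => ?_⟩
  simpa using hdisj k 0

theorem quotGraph_circulant_or_bicirculant [Finite V] (hG : G ≤ autGroup Γ) (hNn : NormalIn N G)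
    (hvt : VertexTrans G) (hH : H ≤ G) (hcyc : IsCyclic H) (hsemi : Semiregular H) {v₀ v₁ : V}
    (h2orb : TwoOrbits H v₀ v₁) :
    ((∀ a w : V, ∃ σ ∈ H, cls N (σ a) = cls N w) ∧ IsCirculant (quotGraph Γ N)) ∨
     ((∃ a b : V, (∀ w : V, (∃ σ ∈ H, cls N (σ a) = cls N w) ∨
          (∃ σ ∈ H, cls N (σ b) = cls N w)) ∧ ¬ ∃ σ ∈ H, cls N (σ a) = cls N b) ∧
       IsBicirculant (quotGraph Γ N)) := by
  obtain ⟨g, hgH, hgen⟩ := exists_pow_eq_of_isCyclic hcyc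
  by_cases hsep : ∀ σ ∈ H, ∀ τ ∈ H, cls N (σ v₀) ≠ cls N (τ v₁)
  · refine Or.inr ⟨⟨v₀, v₁, fun w => ?_, fun ⟨σ, hσ, h⟩ => hsep σ hσ 1 H.one_mem h⟩,
      isBicirculant_quotGraph hG hNn hvt hH hsemi hgH hgen h2orb hsep⟩
    rcases h2orb.2 w with ⟨σ, hσ, rfl⟩ | ⟨σ, hσ, rfl⟩
    exacts [Or.inl ⟨σ, hσ, rfl⟩, Or.inr ⟨σ, hσ, rfl⟩]
  push Not at hsep
  obtain ⟨σ, hσ, τ, hτ, hστ⟩ := hsep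
  have hreach : ∀ w, ∃ ρ ∈ H, cls N (ρ v₀) = cls N w := fun w => by
    rcases h2orb.2 w with ⟨ρ, hρ, rfl⟩ | ⟨ρ, hρ, rfl⟩
    · exact ⟨ρ, hρ, rfl⟩
    · have hρτ : ρ * τ⁻¹ ∈ H := H.mul_mem hρ (H.inv_mem hτ)
      refine ⟨ρ * τ⁻¹ * σ, H.mul_mem hρτ hσ, ?_⟩
      simpa using (cls_apply_eq_cls_apply_iff hNn (hH hρτ)).mpr hστ
  have htrans := exists_mem_cls_apply_eq_of_forall hNn hH hreach
  have : Nonempty V := ⟨v₀⟩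
  refine Or.inl ⟨htrans, isCirculant_quotGraph hG hNn (hH hgH) fun a w => ?_⟩
  obtain ⟨ρ, hρ, h⟩ := htrans a w
  obtain ⟨k, rfl⟩ := hgen ρ hρ
  exact ⟨k, h⟩

end Cyclic

section Quasiprimitive

variable {G N : Subgroup (Equiv.Perm V)}

theorem exists_cls_apply_eq_iff {M : Subgroup (Equiv.Perm V)} (hNM : N ≤ M) {p q : V} :
    (∃ σ ∈ M, cls N (σ p) = cls N q) ↔ q ∈ orb M p := by
  constructor
  · rintro ⟨σ, hσ, hpq⟩
    obtain ⟨n, hn, rfl⟩ := cls_eq_cls_iff.mp hpq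
    exact ⟨n * σ, M.mul_mem (hNM hn) hσ, rfl⟩
  · rintro ⟨σ, hσ, rfl⟩
    exact ⟨σ, hσ, rfl⟩

theorem quasiprimitive_or_biquasiprimitive
    (hmax : ∀ M : Subgroup (Equiv.Perm V), NormalIn M G → N ≤ M →
      AtLeastThreeOrbits M → M = N) :
    (∀ M : Subgroup (Equiv.Perm V), NormalIn M G → N ≤ M → M ≠ N →
        ∀ u v : V, ∃ σ ∈ M, cls N (σ u) = cls N v) ∨
     ((∀ M : Subgroup (Equiv.Perm V), NormalIn M G → N ≤ M → M ≠ N →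
        ∃ a b : V, ∀ w : V, (∃ σ ∈ M, cls N (σ a) = cls N w) ∨
          (∃ σ ∈ M, cls N (σ b) = cls N w)) ∧
      (∃ M : Subgroup (Equiv.Perm V), NormalIn M G ∧ N ≤ M ∧ M ≠ N ∧
        ∃ a b : V, (∀ w : V, (∃ σ ∈ M, cls N (σ a) = cls N w) ∨
            (∃ σ ∈ M, cls N (σ b) = cls N w)) ∧
          ¬ ∃ σ ∈ M, cls N (σ a) = cls N b)) := by
  have hM2 : ∀ M : Subgroup (Equiv.Perm V), NormalIn M G → N ≤ M → M ≠ N →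
      ∀ p q s : V, q ∈ orb M p ∨ s ∈ orb M p ∨ s ∈ orb M q := by
    intro M hMn hNM hMN p q s
    by_contra h
    push Not at h
    exact hMN (hmax M hMn hNM ⟨p, q, s, h.1, h.2.1, h.2.2⟩)
  by_cases hq : ∀ M : Subgroup (Equiv.Perm V), NormalIn M G → N ≤ M → M ≠ N →
      ∀ u v : V, v ∈ orb M u
  · exact Or.inl fun M hMn hNM hMN u v =>
      (exists_cls_apply_eq_iff hNM).mpr (hq M hMn hNM hMN u v)
  push Not at hq
  obtain ⟨M₀, hM₀n, hNM₀, hM₀N, u, v, huv⟩ := hq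
  refine Or.inr ⟨fun M hMn hNM hMN => ?_, M₀, hM₀n, hNM₀, hM₀N, u, v, ?_⟩
  · simp only [exists_cls_apply_eq_iff hNM]
    by_cases hM : ∃ b, b ∉ orb M u
    · obtain ⟨b, hb⟩ := hM
      exact ⟨u, b, fun w => (hM2 M hMn hNM hMN u b w).resolve_left hb⟩
    · push Not at hM
      exact ⟨u, u, fun w => Or.inl (hM w)⟩
  · simp only [exists_cls_apply_eq_iff hNM₀]
    exact ⟨fun w => (hM2 M₀ hM₀n hNM₀ hM₀N u v w).resolve_left huv, huv⟩

end Quasiprimitive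

theorem stmt11_general {V : Type*} [Fintype V] (Γ : SimpleGraph V)
    (G H N : Subgroup (Equiv.Perm V))
    (hG : G ≤ autGroup Γ) (hconn : Γ.Connected) (hat : ArcTrans Γ G)
    (hH : H ≤ G) (hcyc : IsCyclic ↥H) (hsemi : Semiregular H)
    (v₀ v₁ : V) (h2orb : TwoOrbits H v₀ v₁)
    (hNn : NormalIn N G) (hN3 : AtLeastThreeOrbits N)
    (hmax : ∀ M : Subgroup (Equiv.Perm V), NormalIn M G → N ≤ M →
      AtLeastThreeOrbits M → M = N) :
    -- `Γ` is an `r`-cover of `Γ_N`, `r` dividing the valency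
    (∃ r : ℕ, IsRCover Γ N r ∧ ∀ v : V, r ∣ (Γ.neighborSet v).ncard) ∧
    -- `G` induces automorphisms of `Γ_N`, and `Γ_N` is `G/N`-arc-transitive
    (∀ σ ∈ G, ∃ π : Equiv.Perm (orbQuot N), π ∈ autGroup (quotGraph Γ N) ∧
      ∀ v : V, π (cls N v) = cls N (σ v)) ∧
    (∀ u v u' v' : V, (quotGraph Γ N).Adj (cls N u) (cls N v) →
      (quotGraph Γ N).Adj (cls N u') (cls N v') →
      ∃ σ ∈ G, cls N (σ u) = cls N u' ∧ cls N (σ v) = cls N v') ∧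
    -- `Γ_N` is a circulant or a bicirculant over `HN/N`
    (((∀ a w : V, ∃ σ ∈ H, cls N (σ a) = cls N w) ∧ IsCirculant (quotGraph Γ N)) ∨
     ((∃ a b : V, (∀ w : V, (∃ σ ∈ H, cls N (σ a) = cls N w) ∨
          (∃ σ ∈ H, cls N (σ b) = cls N w)) ∧ ¬ ∃ σ ∈ H, cls N (σ a) = cls N b) ∧
       IsBicirculant (quotGraph Γ N))) ∧
    -- `G/N` is faithful on the quotient
    (∀ σ ∈ G, (∀ v : V, cls N (σ v) = cls N v) → σ ∈ N) ∧
    -- `G/N` is quasiprimitive or bi-quasiprimitive on the quotient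
    ((∀ M : Subgroup (Equiv.Perm V), NormalIn M G → N ≤ M → M ≠ N →
        ∀ u v : V, ∃ σ ∈ M, cls N (σ u) = cls N v) ∨
     ((∀ M : Subgroup (Equiv.Perm V), NormalIn M G → N ≤ M → M ≠ N →
        ∃ a b : V, ∀ w : V, (∃ σ ∈ M, cls N (σ a) = cls N w) ∨
          (∃ σ ∈ M, cls N (σ b) = cls N w)) ∧
      (∃ M : Subgroup (Equiv.Perm V), NormalIn M G ∧ N ≤ M ∧ M ≠ N ∧
        ∃ a b : V, (∀ w : V, (∃ σ ∈ M, cls N (σ a) = cls N w) ∨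
            (∃ σ ∈ M, cls N (σ b) = cls N w)) ∧
          ¬ ∃ σ ∈ M, cls N (σ a) = cls N b))) := by
  have hN2 : ∃ a b : V, cls N a ≠ cls N b := by
    obtain ⟨a, b, -, hab, -⟩ := hN3
    exact ⟨a, b, fun h => hab (cls_eq_cls_iff.mp h)⟩
  have : Nontrivial V := by
    obtain ⟨a, b, hab⟩ := hN2
    exact ⟨a, b, fun h => hab (h ▸ rfl)⟩
  obtain ⟨w, hw⟩ := hconn.preconnected.exists_adj_of_nontrivial v₀
  have hcover := isRCover_of_arcTrans hG hNn hat hw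
  refine ⟨⟨_, hcover, dvd_ncard_neighborSet_of_isRCover hcover
      fun x y => cls_ne_cls_of_adj hNn hconn hat hN2⟩,
    fun σ hσ => ⟨quotPerm hNn hσ, quotPerm_mem_autGroup hG hNn hσ, quotPerm_cls hNn hσ⟩,
    quotGraph_arcTrans hNn hat,
    quotGraph_circulant_or_bicirculant hG hNn (.of_arcTrans hconn hat) hH hcyc hsemi h2orb,
    fun σ hσ => mem_of_forall_cls_apply_eq hNn hN3 hmax hσ,
    quasiprimitive_or_biquasiprimitive hmax⟩

/-- **Theorem 3.3.** Let `Γ` be a connected `G`-arc-transitive bicirculant (at least 3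
vertices) over the cyclic subgroup `H` of `G`, and let `N ⊴ G` be maximal with at least
3 orbits. Then `Γ` is an `r`-cover of `Γ_N` with `r` dividing the valency, `Γ_N` is
`G/N`-arc-transitive and is a circulant or a bicirculant over `HN/N`, and `G/N` is
faithful and quasiprimitive or bi-quasiprimitive on the quotient. -/
theorem stmt11 {V : Type*} [Fintype V] (Γ : SimpleGraph V)
    (G H N : Subgroup (Equiv.Perm V))
    (hG : G ≤ autGroup Γ) (hconn : Γ.Connected) (hat : ArcTrans Γ G)
    (hcard : 3 ≤ Nat.card V)
    (hH : H ≤ G) (hcyc : IsCyclic ↥H) (hsemi : Semiregular H)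
    (v₀ v₁ : V) (h2orb : TwoOrbits H v₀ v₁)
    (hNn : NormalIn N G) (hN3 : AtLeastThreeOrbits N)
    (hmax : ∀ M : Subgroup (Equiv.Perm V), NormalIn M G → N ≤ M →
      AtLeastThreeOrbits M → M = N) :
    -- `Γ` is an `r`-cover of `Γ_N`, `r` dividing the valency
    (∃ r : ℕ, IsRCover Γ N r ∧ ∀ v : V, r ∣ (Γ.neighborSet v).ncard) ∧
    -- `G` induces automorphisms of `Γ_N`, and `Γ_N` is `G/N`-arc-transitive
    (∀ σ ∈ G, ∃ π : Equiv.Perm (orbQuot N), π ∈ autGroup (quotGraph Γ N) ∧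
      ∀ v : V, π (cls N v) = cls N (σ v)) ∧
    (∀ u v u' v' : V, (quotGraph Γ N).Adj (cls N u) (cls N v) →
      (quotGraph Γ N).Adj (cls N u') (cls N v') →
      ∃ σ ∈ G, cls N (σ u) = cls N u' ∧ cls N (σ v) = cls N v') ∧
    -- `Γ_N` is a circulant or a bicirculant over `HN/N`
    (((∀ a w : V, ∃ σ ∈ H, cls N (σ a) = cls N w) ∧ IsCirculant (quotGraph Γ N)) ∨
     ((∃ a b : V, (∀ w : V, (∃ σ ∈ H, cls N (σ a) = cls N w) ∨
          (∃ σ ∈ H, cls N (σ b) = cls N w)) ∧ ¬ ∃ σ ∈ H, cls N (σ a) = cls N b) ∧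
       IsBicirculant (quotGraph Γ N))) ∧
    -- `G/N` is faithful on the quotient
    (∀ σ ∈ G, (∀ v : V, cls N (σ v) = cls N v) → σ ∈ N) ∧
    -- `G/N` is quasiprimitive or bi-quasiprimitive on the quotient
    ((∀ M : Subgroup (Equiv.Perm V), NormalIn M G → N ≤ M → M ≠ N →
        ∀ u v : V, ∃ σ ∈ M, cls N (σ u) = cls N v) ∨
     ((∀ M : Subgroup (Equiv.Perm V), NormalIn M G → N ≤ M → M ≠ N →
        ∃ a b : V, ∀ w : V, (∃ σ ∈ M, cls N (σ a) = cls N w) ∨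
          (∃ σ ∈ M, cls N (σ b) = cls N w)) ∧
      (∃ M : Subgroup (Equiv.Perm V), NormalIn M G ∧ N ≤ M ∧ M ≠ N ∧
        ∃ a b : V, (∀ w : V, (∃ σ ∈ M, cls N (σ a) = cls N w) ∨
            (∃ σ ∈ M, cls N (σ b) = cls N w)) ∧
          ¬ ∃ σ ∈ M, cls N (σ a) = cls N b))) :=
  stmt11_general Γ G H N hG hconn hat hH hcyc hsemi v₀ v₁ h2orb hNn hN3 hmax

end ATB
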